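/- Let λ₁, λ₂, λ₃ be pairwise distinct complex numbers and R ∈ ℂ. Then (F₁,F₂,F₃,G₁,G₂,G₃) ∈ ℂ⁶ satisfies (F_a − λ_a²R)λ_b − (F_b − λ_b²R)λ_a = (G_a + λ_aF_a) − (G_b + λ_bF_b) for all a ≠ b if and only if there exist U,V,W ∈ ℂ such that F_a = Rλ_a² + Uλ_a + V and G_a = −λ_aF_a − Vλ_a + W for all a ∈ {1,2,3}. -/

import Mathlib

/-!
With `P_a = F_a - λ_a² R` and `Q_a = G_a + λ_a F_a` the system reads
`P_a λ_b - P_b λ_a = Q_a - Q_b`. Summing it over a cycle `a → b → c → a` makes the `Q`'s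
telescope, leaving the vanishing of the determinant that says the points `(λ_a, P_a)` are
collinear; as the `λ_a` are distinct, `P` is an affine function `U λ + V` of `λ`. Substituting
back, the system becomes `Q_a + V λ_a = Q_b + V λ_b`, i.e. `Q_a = -V λ_a + W`.
-/

section CrossSystem

variable {K ι : Type*} [Field K] {lam P Q : ι → K} {U V : K}

theorem exists_affine_of_cross_eq_sub (h : ∀ a b, P a * lam b - P b * lam a = Q a - Q b)
    {i j : ι} (hij : lam i ≠ lam j) : ∃ U V : K, ∀ a, P a = U * lam a + V := by
  have hij' : lam i - lam j ≠ 0 := sub_ne_zero.mpr hij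
  refine ⟨(P i - P j) / (lam i - lam j), (P j * lam i - P i * lam j) / (lam i - lam j),
    fun a => ?_⟩
  field_simp
  linear_combination h i j + h j a + h a i

theorem cross_eq_sub_iff_of_affine (hP : ∀ a, P a = U * lam a + V) (i : ι) :
    (∀ a b, P a * lam b - P b * lam a = Q a - Q b) ↔
      ∀ a, Q a = -V * lam a + (Q i + V * lam i) := by
  simp only [hP]
  constructor
  · intro h a
    linear_combination h i a
  · intro h a b
    linear_combination h b - h a

theorem cross_eq_sub_of_ne_iff :
    (∀ a b, a ≠ b → P a * lam b - P b * lam a = Q a - Q b) ↔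
      ∀ a b, P a * lam b - P b * lam a = Q a - Q b :=
  ⟨fun h a b => (eq_or_ne a b).elim (by rintro rfl; ring) (h a b), fun h a b _ => h a b⟩

theorem cross_eq_sub_iff [Nontrivial ι] (hlam : Function.Injective lam) :
    (∀ a b, P a * lam b - P b * lam a = Q a - Q b) ↔
      ∃ U V W : K, ∀ a, P a = U * lam a + V ∧ Q a = -V * lam a + W := by
  constructor
  · intro h
    obtain ⟨i, j, hij⟩ := exists_pair_ne ι
    obtain ⟨U, V, hP⟩ := exists_affine_of_cross_eq_sub h (hlam.ne hij)
    exact ⟨U, V, _, fun a => ⟨hP a, (cross_eq_sub_iff_of_affine hP i).1 h a⟩⟩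
  · rintro ⟨U, V, W, hPQ⟩ a b
    linear_combination (lam b) * (hPQ a).1 - (lam a) * (hPQ b).1 - (hPQ a).2 + (hPQ b).2

end CrossSystem

/-- the corank-three linear system
`(F_a − λ_a² R) λ_b − (F_b − λ_b² R) λ_a = (G_a + λ_a F_a) − (G_b + λ_b F_b)` for all
`a ≠ b`, with `λ₁, λ₂, λ₃` pairwise distinct, has solution set exactly
`F_a = R λ_a² + U λ_a + V`, `G_a = −λ_a F_a − V λ_a + W`. -/
theorem stmt2 (lam : Fin 3 → ℂ) (hlam : Function.Injective lam) (R : ℂ)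
    (F G : Fin 3 → ℂ) :
    (∀ a b : Fin 3, a ≠ b →
        (F a - (lam a)^2 * R) * lam b - (F b - (lam b)^2 * R) * lam a
          = (G a + lam a * F a) - (G b + lam b * F b)) ↔
      ∃ U V W : ℂ, ∀ a : Fin 3,
        F a = R * (lam a)^2 + U * lam a + V ∧
        G a = -(lam a) * F a - V * lam a + W := by
  refine (cross_eq_sub_of_ne_iff.trans (cross_eq_sub_iff (P := fun a => F a - lam a ^ 2 * R)
    (Q := fun a => G a + lam a * F a) hlam)).trans ?_
  refine exists_congr fun U => exists_congr fun V => exists_congr fun W => forall_congr' fun a => ?_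
  constructor <;> rintro ⟨hF, hG⟩ <;>
    exact ⟨by linear_combination hF, by linear_combination hG⟩
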